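/- Let $\Delta\ge 1$ and let $t_1,\dots,t_\Delta$ and $t'_1,\dots,t'_\Delta$ be two families of rooted trees; let $\tilde\tau$ (resp. $\tilde\tau'$) be the tree formed by attaching $t_1,\dots,t_\Delta$ (resp. $t'_1,\dots,t'_\Delta$) to a common root. For each $h\ge 1$ let $N_h=\#\{1\le i\le\Delta: \mathrm{Ht}(t_i)\ge h\}$ and $N'_h=\#\{1\le i\le\Delta: \mathrm{Ht}(t'_i)\ge h\}$. Then the largest common (unrooted) subtree satisfies $\operatorname{LCS}(\tilde\tau,\tilde\tau')\ge \sum_{h\ge 1} N_h\wedge N'_h$. -/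

import Mathlib

inductive PlaneTree : Type where
  | node : List PlaneTree → PlaneTree

instance : MeasurableSpace PlaneTree := ⊤

namespace PlaneTree

mutual
def size : PlaneTree → ℕ
  | .node ts => 1 + sizeF ts
def sizeF : List PlaneTree → ℕ
  | [] => 0
  | t :: ts => size t + sizeF ts
end

mutual
def height : PlaneTree → ℕ
  | .node ts => heightF ts
def heightF : List PlaneTree → ℕ
  | [] => 0
  | t :: ts => max (height t + 1) (heightF ts)
end

mutual
def maxDeg : PlaneTree → ℕ
  | .node ts => max ts.length (maxDegF ts)
def maxDegF : List PlaneTree → ℕ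
  | [] => 0
  | t :: ts => max (maxDeg t) (maxDegF ts)
end

mutual
def treeProb (μ : ℕ → ℝ) : PlaneTree → ℝ
  | .node ts => μ ts.length * forestProb μ ts
def forestProb (μ : ℕ → ℝ) : List PlaneTree → ℝ
  | [] => 1
  | t :: ts => treeProb μ t * forestProb μ ts
end

/-- Law of a root-biased Bienaymé tree. -/
def rootBiasedProb (μ : ℕ → ℝ) : PlaneTree → ℝ
  | .node ts => (ts.length + 1 : ℝ) * μ (ts.length + 1) * forestProb μ ts

/-- Root-preserving embedding of plane trees (ignoring the plane order). -/
inductive Embeds : PlaneTree → PlaneTree → Prop where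
  | intro (ss ts : List PlaneTree) (f : Fin ss.length → Fin ts.length)
      (hinj : Function.Injective f)
      (h : ∀ i, Embeds (ss.get i) (ts.get (f i))) :
      Embeds (.node ss) (.node ts)

/-- Maximum size of a common rooted subtree. -/
noncomputable def LCSr (t t' : PlaneTree) : ℕ :=
  sSup {n | ∃ s : PlaneTree, s.size = n ∧ s.Embeds t ∧ s.Embeds t'}

end PlaneTree

namespace PlaneTree

mutual
/-- Addresses (root-to-vertex child-index sequences) of the vertices of a plane
tree. -/
def addrs : PlaneTree → List (List ℕ)
  | .node ts => [] :: addrsF 0 ts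
def addrsF : ℕ → List PlaneTree → List (List ℕ)
  | _, [] => []
  | i, t :: ts => (addrs t).map (fun a => i :: a) ++ addrsF (i + 1) ts
end

/-- Adjacency of addresses: one is the parent (i.e. the address with the last
index dropped) of the other. -/
def treeAdj (a b : List ℕ) : Prop :=
  (b ≠ [] ∧ a = b.dropLast) ∨ (a ≠ [] ∧ b = a.dropLast)

/-- Graph (not necessarily root-preserving) embedding of the tree `s` into the
tree `t`: an injection of the vertices preserving adjacency. -/
def IsGraphEmbed (s t : PlaneTree) : Prop :=
  ∃ φ : List ℕ → List ℕ,
    Set.InjOn φ {a | a ∈ addrs s} ∧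
    (∀ a ∈ addrs s, φ a ∈ addrs t) ∧
    (∀ a ∈ addrs s, ∀ b ∈ addrs s, treeAdj a b → treeAdj (φ a) (φ b))

/-- Maximum size of a common (unrooted) subtree of two trees. -/
noncomputable def LCSu (t t' : PlaneTree) : ℕ :=
  sSup {n | ∃ s : PlaneTree, s.size = n ∧ IsGraphEmbed s t ∧ IsGraphEmbed s t'}

end PlaneTree

namespace PlaneTree

@[simp] lemma addrs_node (ts : List PlaneTree) : addrs (.node ts) = [] :: addrsF 0 ts := by
  rw [addrs]

@[simp] lemma addrsF_nil (j : ℕ) : addrsF j [] = [] := by rw [addrsF]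

@[simp] lemma addrsF_cons (j : ℕ) (t : PlaneTree) (ts : List PlaneTree) :
    addrsF j (t :: ts) = (addrs t).map (fun a => j :: a) ++ addrsF (j + 1) ts := by
  rw [addrsF]

lemma mem_addrsF {a : List ℕ} : ∀ {j : ℕ} {ts : List PlaneTree},
    a ∈ addrsF j ts ↔ ∃ i, ∃ h : i < ts.length, ∃ b ∈ addrs ts[i], a = (j + i) :: b := by
  intro j ts
  induction ts generalizing j with
  | nil => simp
  | cons u ts ih =>
    simp only [addrsF_cons, List.mem_append, List.mem_map, ih]
    constructor
    · rintro (⟨b, hb, rfl⟩ | ⟨i, hi, b, hb, rfl⟩)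
      · exact ⟨0, by simp, b, by simpa using hb, by simp⟩
      · exact ⟨i + 1, by simpa using hi, b, by simpa using hb, by simp [Nat.add_assoc, Nat.add_comm 1 i]⟩
    · rintro ⟨i, hi, b, hb, rfl⟩
      cases i with
      | zero => exact Or.inl ⟨b, by simpa using hb, by simp⟩
      | succ i => exact Or.inr ⟨i, by simpa using hi, b, by simpa using hb, by simp [Nat.add_assoc, Nat.add_comm 1 i]⟩

end PlaneTree
namespace PlaneTree

lemma mem_addrs_node {a : List ℕ} {ts : List PlaneTree} :
    a ∈ addrs (.node ts) ↔ a = [] ∨ ∃ i, ∃ h : i < ts.length, ∃ b ∈ addrs ts[i], a = i :: b := by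
  simp [mem_addrsF]

lemma nil_mem_addrs (t : PlaneTree) : [] ∈ addrs t := by
  cases t; simp

lemma ne_nil_of_mem_addrsF {a : List ℕ} {j : ℕ} {ts : List PlaneTree}
    (h : a ∈ addrsF j ts) : ∃ i b, j ≤ i ∧ a = i :: b := by
  rw [mem_addrsF] at h
  obtain ⟨i, hi, b, hb, rfl⟩ := h
  exact ⟨j + i, b, by omega, rfl⟩

mutual
theorem nodup_addrs : ∀ t : PlaneTree, (addrs t).Nodup
  | .node ts => by
    rw [addrs_node, List.nodup_cons]
    refine ⟨fun h => ?_, nodup_addrsF 0 ts⟩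
    · obtain ⟨i, b, _, h⟩ := ne_nil_of_mem_addrsF h
      cases h
theorem nodup_addrsF : ∀ (j : ℕ) (ts : List PlaneTree), (addrsF j ts).Nodup
  | j, [] => by simp
  | j, t :: ts => by
    rw [addrsF_cons]
    refine List.Nodup.append ((nodup_addrs t).map (fun a b h => by simpa using h))
      (nodup_addrsF (j + 1) ts) ?_
    intro a ha hb
    obtain ⟨b, _, rfl⟩ := List.mem_map.1 ha
    obtain ⟨i, c, hji, h⟩ := ne_nil_of_mem_addrsF hb
    cases h; omega
end

mutual
theorem length_addrs : ∀ t : PlaneTree, (addrs t).length = t.size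
  | .node ts => by rw [addrs_node, size]; simp [length_addrsF 0 ts, Nat.add_comm]
theorem length_addrsF : ∀ (j : ℕ) (ts : List PlaneTree), (addrsF j ts).length = sizeF ts
  | j, [] => by simp [sizeF]
  | j, t :: ts => by
    rw [addrsF_cons, sizeF]
    simp [length_addrs t, length_addrsF (j + 1) ts]
end

mutual
theorem exists_addr_height : ∀ t : PlaneTree, ∃ a ∈ addrs t, a.length = t.height
  | .node ts => by
    rw [height]
    rcases exists_addr_heightF 0 ts with h | ⟨a, ha, hl⟩
    · exact ⟨[], nil_mem_addrs _, by simp [h]⟩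
    · exact ⟨a, by simp [ha], hl⟩
theorem exists_addr_heightF : ∀ (j : ℕ) (ts : List PlaneTree),
    heightF ts = 0 ∨ ∃ a ∈ addrsF j ts, a.length = heightF ts
  | j, [] => Or.inl rfl
  | j, t :: ts => by
    right
    rw [heightF, addrsF_cons]
    rcases Nat.le_total (heightF ts) (t.height + 1) with hle | hle
    · obtain ⟨a, ha, hl⟩ := exists_addr_height t
      exact ⟨j :: a, by simp [List.mem_map, ha], by simp [hl, Nat.max_eq_left hle]⟩
    · rcases exists_addr_heightF (j + 1) ts with h | ⟨a, ha, hl⟩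
      · obtain ⟨a, ha2, hl⟩ := exists_addr_height t
        exact ⟨j :: a, by simp [List.mem_map, ha2], by simp [hl]; omega⟩
      · exact ⟨a, by simp [ha], by simp [hl, Nat.max_eq_right hle]⟩
end

lemma take_mem_addrs {a : List ℕ} : ∀ {t : PlaneTree}, a ∈ addrs t → ∀ k, a.take k ∈ addrs t := by
  induction a with
  | nil => intro t _ k; simpa using nil_mem_addrs t
  | cons i b ih =>
    rintro ⟨ts⟩ ha k
    rcases mem_addrs_node.1 ha with h | ⟨i', hi', c, hc, hic⟩
    · exact absurd h (by simp)
    · injection hic with h1 h2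
      subst h1; subst h2
      cases k with
      | zero => simpa using nil_mem_addrs _
      | succ k =>
        rw [List.take_succ_cons]
        exact mem_addrs_node.2 (Or.inr ⟨i, hi', b.take k, ih hc k, rfl⟩)

end PlaneTree
namespace PlaneTree

def path : ℕ → PlaneTree
  | 0 => .node []
  | n + 1 => .node [path n]

lemma height_path : ∀ n, (path n).height = n
  | 0 => by rw [path, height]; rfl
  | n + 1 => by
    rw [path, height, heightF, heightF, height_path n]
    simp

lemma size_path : ∀ n, (path n).size = n + 1
  | 0 => by rw [path, size]; rfl
  | n + 1 => by
    rw [path, size, sizeF, sizeF, size_path n]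
    omega

lemma mem_addrs_path : ∀ {n : ℕ} {a : List ℕ},
    a ∈ (path n).addrs ↔ ∃ k ≤ n, a = List.replicate k 0 := by
  intro n
  induction n with
  | zero =>
    intro a
    rw [path]
    simp only [mem_addrs_node]
    constructor
    · rintro (rfl | ⟨i, hi, _⟩); · exact ⟨0, le_refl _, rfl⟩
      · simp at hi
    · rintro ⟨k, hk, rfl⟩
      interval_cases k
      exact Or.inl rfl
  | succ n ih =>
    intro a
    rw [path]
    simp only [mem_addrs_node]
    constructor
    · rintro (rfl | ⟨i, hi, b, hb, rfl⟩)
      · exact ⟨0, by omega, rfl⟩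
      · simp only [List.length_singleton] at hi
        interval_cases i
        obtain ⟨k, hk, rfl⟩ := ih.1 (by simpa using hb)
        exact ⟨k + 1, by omega, rfl⟩
    · rintro ⟨k, hk, rfl⟩
      cases k with
      | zero => exact Or.inl rfl
      | succ k =>
        refine Or.inr ⟨0, by simp, List.replicate k 0, ?_, by simp [List.replicate_succ]⟩
        simpa using ih.2 ⟨k, by omega, rfl⟩

/-- The size of a tree embeds-bounds. -/
lemma size_le_of_isGraphEmbed {s t : PlaneTree} (h : IsGraphEmbed s t) : s.size ≤ t.size := by
  obtain ⟨φ, hinj, hmaps, -⟩ := h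
  rw [← length_addrs, ← length_addrs]
  have h1 : (addrs s).toFinset.card = (addrs s).length :=
    List.toFinset_card_of_nodup (nodup_addrs s)
  have h2 : ((addrs s).toFinset.image φ).card = (addrs s).toFinset.card :=
    Finset.card_image_of_injOn (fun a ha b hb => hinj (by simpa using ha) (by simpa using hb))
  have h3 : (addrs s).toFinset.image φ ⊆ (addrs t).toFinset := by
    intro x hx
    obtain ⟨a, ha, rfl⟩ := Finset.mem_image.1 hx
    simpa using hmaps a (by simpa using ha)
  calc (addrs s).length = ((addrs s).toFinset.image φ).card := by rw [h2, h1]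
    _ ≤ (addrs t).toFinset.card := Finset.card_le_card h3
    _ ≤ (addrs t).length := (addrs t).toFinset_card_le

lemma bddAbove_LCSu_set (t t' : PlaneTree) :
    BddAbove {n | ∃ s : PlaneTree, s.size = n ∧ IsGraphEmbed s t ∧ IsGraphEmbed s t'} := by
  refine ⟨t.size, fun n hn => ?_⟩
  obtain ⟨s, rfl, h1, -⟩ := hn
  exact size_le_of_isGraphEmbed h1

end PlaneTree
namespace PlaneTree

lemma mem_addrs_star {Δ : ℕ} (m : Fin Δ → ℕ) {a : List ℕ} :
    a ∈ addrs (.node (List.ofFn fun i => path (m i))) ↔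
      a = [] ∨ ∃ i : Fin Δ, ∃ k ≤ m i, a = (i : ℕ) :: List.replicate k 0 := by
  rw [mem_addrs_node]
  constructor
  · rintro (rfl | ⟨i, hi, b, hb, rfl⟩)
    · exact Or.inl rfl
    · right
      rw [List.length_ofFn] at hi
      rw [List.getElem_ofFn] at hb
      obtain ⟨k, hk, rfl⟩ := mem_addrs_path.1 hb
      exact ⟨⟨i, hi⟩, k, hk, rfl⟩
  · rintro (rfl | ⟨i, k, hk, rfl⟩)
    · exact Or.inl rfl
    · refine Or.inr ⟨i, by simp, List.replicate k 0, ?_, rfl⟩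
      rw [List.getElem_ofFn]
      exact mem_addrs_path.2 ⟨k, by simpa using hk, rfl⟩

def starMap {Δ : ℕ} (σ : Equiv.Perm (Fin Δ)) (w : Fin Δ → List ℕ) : List ℕ → List ℕ
  | [] => []
  | i :: b => if h : i < Δ then ((σ ⟨i, h⟩ : Fin Δ) : ℕ) :: ((w ⟨i, h⟩).take b.length) else []

@[simp] lemma starMap_nil {Δ : ℕ} (σ : Equiv.Perm (Fin Δ)) (w : Fin Δ → List ℕ) :
    starMap σ w [] = [] := rfl

lemma starMap_cons {Δ : ℕ} (σ : Equiv.Perm (Fin Δ)) (w : Fin Δ → List ℕ) (i : Fin Δ) (b : List ℕ) :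
    starMap σ w ((i : ℕ) :: b) = ((σ i : Fin Δ) : ℕ) :: ((w i).take b.length) := by
  rw [starMap]
  simp [i.isLt]

lemma isGraphEmbed_star {Δ : ℕ} (m : Fin Δ → ℕ) (ts : Fin Δ → PlaneTree) (σ : Equiv.Perm (Fin Δ))
    (hm : ∀ i, m i ≤ (ts (σ i)).height) :
    IsGraphEmbed (.node (List.ofFn fun i => path (m i))) (.node (List.ofFn ts)) := by
  have hw : ∀ i : Fin Δ, ∃ w ∈ addrs (ts (σ i)), w.length = m i := by
    intro i
    obtain ⟨a, ha, hl⟩ := exists_addr_height (ts (σ i))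
    exact ⟨a.take (m i), take_mem_addrs ha _,
      by rw [List.length_take, hl]; exact min_eq_left (hm i)⟩
  choose w hwmem hwlen using hw
  have hlen_take : ∀ (i : Fin Δ) (k : ℕ), k ≤ m i → ((w i).take k).length = k := by
    intro i k hk
    rw [List.length_take, hwlen]
    omega
  refine ⟨starMap σ w, ?_, ?_, ?_⟩
  · -- injectivity
    rintro a ha b hb hab
    simp only [Set.mem_setOf_eq, mem_addrs_star] at ha hb
    rcases ha with rfl | ⟨i, k, hk, rfl⟩ <;> rcases hb with rfl | ⟨i', k', hk', rfl⟩
    · rfl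
    · rw [starMap_nil, starMap_cons] at hab; exact absurd hab (by simp)
    · rw [starMap_nil, starMap_cons] at hab; exact absurd hab.symm (by simp)
    · rw [starMap_cons, starMap_cons] at hab
      simp only [List.cons.injEq, List.length_replicate] at hab
      obtain ⟨h1, h2⟩ := hab
      have hii : i = i' := σ.injective (Fin.val_injective h1)
      subst hii
      have hkk : k = k' := by
        have e1 := hlen_take i k hk
        have e2 := hlen_take i k' hk'
        have := congrArg List.length h2
        rw [e1, e2] at this
        exact this
      rw [hkk]
  · -- maps into addrs
    rintro a ha
    rcases (mem_addrs_star m).1 ha with rfl | ⟨i, k, hk, rfl⟩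
    · exact nil_mem_addrs _
    · rw [starMap_cons]
      refine mem_addrs_node.2 (Or.inr ⟨(σ i : ℕ), by simp, (w i).take (List.replicate k 0).length,
        ?_, rfl⟩)
      rw [List.getElem_ofFn]
      exact take_mem_addrs (hwmem i) _
  · -- adjacency
    have key : ∀ a, ∀ b ∈ addrs (PlaneTree.node (List.ofFn fun i => path (m i))),
        b ≠ [] → a = b.dropLast → treeAdj (starMap σ w a) (starMap σ w b) := by
      rintro a b hb hbne rfl
      rcases (mem_addrs_star m).1 hb with rfl | ⟨i, k, hk, rfl⟩
      · exact absurd rfl hbne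
      · cases k with
        | zero =>
          have : ((i : ℕ) :: List.replicate 0 0).dropLast = [] := rfl
          rw [this, starMap_nil, starMap_cons]
          exact Or.inl ⟨by simp, by simp⟩
        | succ k =>
          have hrep : (List.replicate (k+1) 0 : List ℕ) ≠ [] := by simp
          rw [List.dropLast_cons_of_ne_nil hrep, List.dropLast_replicate]
          rw [starMap_cons, starMap_cons]
          have htne : (w i).take (List.replicate (k+1) 0).length ≠ [] := by
            have := hlen_take i (k+1) hk
            simp only [List.length_replicate] at this ⊢
            intro h
            rw [h] at this
            simp at this
          refine Or.inl ⟨by simp, ?_⟩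
          rw [List.dropLast_cons_of_ne_nil htne]
          congr 1
          rw [List.dropLast_eq_take, hlen_take i _ (by simpa using hk), List.take_take]
          simp [List.length_replicate]
    intro a ha b hb hadj
    rcases hadj with ⟨h1, h2⟩ | ⟨h1, h2⟩
    · exact key a b hb h1 h2
    · exact Or.symm (key b a ha h1 h2)

end PlaneTree
namespace PlaneTree

lemma sizeF_eq : ∀ ts : List PlaneTree, sizeF ts = (ts.map size).sum
  | [] => rfl
  | t :: ts => by rw [sizeF, List.map_cons, List.sum_cons, sizeF_eq ts]

lemma size_node_ofFn {Δ : ℕ} (f : Fin Δ → PlaneTree) :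
    (PlaneTree.node (List.ofFn f)).size = 1 + ∑ i, (f i).size := by
  rw [size, sizeF_eq, List.map_ofFn, List.sum_ofFn]
  rfl

lemma lower_chain {α : Type*} [LinearOrder α] (A B : Finset α)
    (hA : ∀ ⦃x⦄, x ∈ A → ∀ ⦃y⦄, y ≤ x → y ∈ A)
    (hB : ∀ ⦃x⦄, x ∈ B → ∀ ⦃y⦄, y ≤ x → y ∈ B) :
    A ⊆ B ∨ B ⊆ A := by
  by_cases h : A ⊆ B
  · exact Or.inl h
  · right
    obtain ⟨x, hxA, hxB⟩ := Finset.not_subset.1 h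
    intro y hy
    rcases le_total y x with hyx | hxy
    · exact hA hxA hyx
    · exact absurd (hB hy hxy) hxB

lemma card_inter_of_lower {α : Type*} [LinearOrder α] [DecidableEq α] (A B : Finset α)
    (hA : ∀ ⦃x⦄, x ∈ A → ∀ ⦃y⦄, y ≤ x → y ∈ A)
    (hB : ∀ ⦃x⦄, x ∈ B → ∀ ⦃y⦄, y ≤ x → y ∈ B) :
    (A ∩ B).card = min A.card B.card := by
  rcases lower_chain A B hA hB with h | h
  · rw [Finset.inter_eq_left.mpr h, Nat.min_eq_left (Finset.card_le_card h)]
  · rw [Finset.inter_eq_right.mpr h, Nat.min_eq_right (Finset.card_le_card h)]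

lemma card_filter_perm {Δ : ℕ} (σ : Equiv.Perm (Fin Δ)) (p : Fin Δ → Prop) [DecidablePred p] :
    (Finset.univ.filter fun i => p (σ i)).card = (Finset.univ.filter p).card := by
  refine Finset.card_bij (fun i _ => σ i) ?_ ?_ ?_
  · intro a ha; simpa using (Finset.mem_filter.1 ha).2
  · intro a _ b _ h; exact σ.injective h
  · intro b hb
    exact ⟨σ.symm b, by simpa using (Finset.mem_filter.1 hb).2, by simp⟩

lemma sum_card_filter {Δ H : ℕ} (u : Fin Δ → ℕ) :
    ∑ h ∈ Finset.Icc 1 H, (Finset.univ.filter fun i => h ≤ u i).card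
      = ∑ i, min (u i) H := by
  simp_rw [Finset.card_filter]
  rw [Finset.sum_comm]
  refine Finset.sum_congr rfl fun i _ => ?_
  have : ∑ h ∈ Finset.Icc 1 H, (if h ≤ u i then 1 else 0)
      = ((Finset.Icc 1 H).filter fun h => h ≤ u i).card := by
    rw [Finset.card_filter]
  rw [this]
  have : ((Finset.Icc 1 H).filter fun h => h ≤ u i) = Finset.Icc 1 (min (u i) H) := by
    ext h
    simp only [Finset.mem_filter, Finset.mem_Icc]
    omega
  rw [this, Nat.card_Icc]
  omega

end PlaneTree
open PlaneTree in
/-- Attaching two families of `Δ` rooted trees to common roots, the largest common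
subtree of the resulting trees is at least `∑_{h ≥ 1} N_h ∧ N'_h`, where `N_h`
(resp. `N'_h`) counts the pendant trees of height at least `h`. -/
theorem lcs_star_lower_bound (Δ : ℕ) (hΔ : 1 ≤ Δ)
    (t t' : Fin Δ → PlaneTree) :
    ∀ H : ℕ,
      (∑ h ∈ Finset.Icc 1 H,
        min (Finset.univ.filter (fun i : Fin Δ => h ≤ (t i).height)).card
            (Finset.univ.filter (fun i : Fin Δ => h ≤ (t' i).height)).card)
      ≤ LCSu (PlaneTree.node (List.ofFn t)) (PlaneTree.node (List.ofFn t')) := by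
  intro H
  set f : Fin Δ → ℕ := fun i => (t i).height with hf
  set g : Fin Δ → ℕ := fun i => (t' i).height with hg
  set σ : Equiv.Perm (Fin Δ) := Fin.revPerm.trans (Tuple.sort f) with hσ
  set σ' : Equiv.Perm (Fin Δ) := Fin.revPerm.trans (Tuple.sort g) with hσ'
  have hu : Antitone fun i => f (σ i) := by
    intro i j hij
    exact Tuple.monotone_sort f (by simpa [Fin.rev_le_rev] using hij)
  have hu' : Antitone fun i => g (σ' i) := by
    intro i j hij
    exact Tuple.monotone_sort g (by simpa [Fin.rev_le_rev] using hij)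
  set m : Fin Δ → ℕ := fun i => min (min (f (σ i)) (g (σ' i))) H with hm
  -- Step 1 : rewrite the LHS
  have step1 : (∑ h ∈ Finset.Icc 1 H,
        min (Finset.univ.filter (fun i : Fin Δ => h ≤ (t i).height)).card
            (Finset.univ.filter (fun i : Fin Δ => h ≤ (t' i).height)).card)
      = ∑ i, m i := by
    have e1 : ∀ h ∈ Finset.Icc 1 H,
        min (Finset.univ.filter (fun i : Fin Δ => h ≤ (t i).height)).card
            (Finset.univ.filter (fun i : Fin Δ => h ≤ (t' i).height)).card
        = (Finset.univ.filter fun i : Fin Δ => h ≤ m i).card := by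
      intro h hh
      rw [Finset.mem_Icc] at hh
      rw [← card_filter_perm σ (fun i => h ≤ (t i).height),
          ← card_filter_perm σ' (fun i => h ≤ (t' i).height)]
      rw [← card_inter_of_lower _ _
        (fun x hx y hy => Finset.mem_filter.2 ⟨Finset.mem_univ _,
          le_trans (Finset.mem_filter.1 hx).2 (hu hy)⟩)
        (fun x hx y hy => Finset.mem_filter.2 ⟨Finset.mem_univ _,
          le_trans (Finset.mem_filter.1 hx).2 (hu' hy)⟩)]
      congr 1
      ext i
      simp only [Finset.mem_inter, Finset.mem_filter, Finset.mem_univ, true_and, hm]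
      omega
    rw [Finset.sum_congr rfl e1, sum_card_filter]
    exact Finset.sum_congr rfl fun i _ => Nat.min_eq_left (min_le_right _ _)
  rw [step1]
  -- Step 2 : the star embeds in both trees
  have hemb1 : IsGraphEmbed (.node (List.ofFn fun i => path (m i))) (.node (List.ofFn t)) :=
    isGraphEmbed_star m t σ fun i => le_trans (min_le_left _ _) (min_le_left _ _)
  have hemb2 : IsGraphEmbed (.node (List.ofFn fun i => path (m i))) (.node (List.ofFn t')) :=
    isGraphEmbed_star m t' σ' fun i => le_trans (min_le_left _ _) (min_le_right _ _)
  have hmem : (PlaneTree.node (List.ofFn fun i => path (m i))).size ∈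
      {n | ∃ s : PlaneTree, s.size = n ∧ IsGraphEmbed s (PlaneTree.node (List.ofFn t)) ∧
        IsGraphEmbed s (PlaneTree.node (List.ofFn t'))} :=
    ⟨_, rfl, hemb1, hemb2⟩
  refine le_trans ?_ (le_csSup (bddAbove_LCSu_set _ _) hmem)
  rw [size_node_ofFn]
  have : ∀ i, m i ≤ (path (m i)).size := fun i => by rw [size_path]; omega
  exact le_trans (Finset.sum_le_sum fun i _ => this i) (by omega)
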